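/- Let λ > 0, x ∈ ℂ, and suppose H_0: [0,∞) → ℝ is of bounded variation and H_1,…,H_d are continuously differentiable with H_r'(t) = λ H_{r-1}(t) for 2 ≤ r ≤ d and H_1'(t) = λ H_0(t) for almost every t. Then for all t ≥ 0, ∑_{r=0}^{d} e^{-λ x t} x^r H_r(t) - ∑_{r=0}^{d} x^r H_r(0) = ∫_{(0,t]} e^{-λ x u} dH_0(u) - λ x^{d+1} ∫_0^t e^{-λ x u} H_d(u) du. -/

import Mathlib

/-!
Put `c = -λx` and `I_r = ∫₀ᵗ e^{cu} H_r(u) du`. For `r ≥ 1` integration by parts against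
`e^{cu}` gives `e^{ct} H_r(t) - H_r(0) = λ I_{r-1} + c I_r`. For `r = 0` the same identity holds
with `λ I_{-1}` replaced by the Stieltjes integral `∫_{(0,t]} e^{cu} dH_0(u)`; this is proved by
writing `e^{cu} = e^{ct} - ∫_u^t c e^{cs} ds` and swapping the order of integration over
`{u ≤ s}`. Multiplied by `x^r` and summed, the terms `λ x^r I_{r-1}` and `c x^r I_r = -λ x^{r+1} I_r`
telescope to `-λ x^{d+1} I_d`.
-/

open MeasureTheory Set intervalIntegral

section IntegrationByParts

variable {E : Type*} [NormedAddCommGroup E] [NormedSpace ℝ E] [CompleteSpace E]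

theorem setIntegral_Ioc_eq_measureReal_smul_sub_integral (μ : Measure ℝ)
    [IsLocallyFiniteMeasure μ] {f f' : ℝ → E} {a b : ℝ} (hab : a ≤ b)
    (hf : ∀ s ∈ Icc a b, HasDerivAt f (f' s) s) (hf' : IntervalIntegrable f' volume a b) :
    ∫ u in Ioc a b, f u ∂μ = μ.real (Ioc a b) • f b - ∫ s in a..b, μ.real (Ioc a s) • f' s := by
  have : IsFiniteMeasure (μ.restrict (Ioc a b)) :=
    isFiniteMeasure_restrict.2 measure_Ioc_lt_top.ne
  set F : ℝ → ℝ → E := fun u s => {p : ℝ × ℝ | p.1 ≤ p.2}.indicator (fun p => f' p.2) (u, s)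
  have hF : Integrable (Function.uncurry F)
      ((μ.restrict (Ioc a b)).prod (volume.restrict (Ioc a b))) :=
    ((hf'.1).comp_snd _).indicator (measurableSet_le measurable_fst measurable_snd)
  have hF_left (u : ℝ) (hu : u ∈ Ioc a b) : ∫ s in Ioc a b, F u s = f b - f u := by
    have hset : Ici u ∩ Ioc a b = Icc u b := by
      ext s; simp only [mem_inter_iff, mem_Ici, mem_Ioc, mem_Icc]; grind
    have hIcc : Icc u b ⊆ Icc a b := Icc_subset_Icc_left hu.1.le
    rw [show F u = (Ici u).indicator f' from rfl, MeasureTheory.integral_indicator measurableSet_Ici,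
      Measure.restrict_restrict measurableSet_Ici, hset, integral_Icc_eq_integral_Ioc,
      ← integral_of_le hu.2]
    refine integral_eq_sub_of_hasDerivAt (fun s hs => hf s ?_) (hf'.mono_set ?_)
    · exact hIcc (uIcc_of_le hu.2 ▸ hs)
    · rw [uIcc_of_le hu.2, uIcc_of_le hab]; exact hIcc
  have hF_right (s : ℝ) (hs : s ∈ Ioc a b) : ∫ u in Ioc a b, F u s ∂μ = μ.real (Ioc a s) • f' s := by
    rw [show (fun u => F u s) = (Iic s).indicator (fun _ => f' s) from rfl,
      integral_indicator_const _ measurableSet_Iic, measureReal_restrict_apply measurableSet_Iic,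
      Iic_inter_Ioc_of_le hs.2]
  have hF_int_left : Integrable (fun u => ∫ s in Ioc a b, F u s) (μ.restrict (Ioc a b)) :=
    hF.integral_prod_left
  calc ∫ u in Ioc a b, f u ∂μ = ∫ u in Ioc a b, (f b - ∫ s in Ioc a b, F u s) ∂μ :=
        setIntegral_congr_fun measurableSet_Ioc fun u hu => by rw [hF_left u hu, sub_sub_cancel]
    _ = μ.real (Ioc a b) • f b - ∫ u in Ioc a b, (∫ s in Ioc a b, F u s) ∂μ := by
        rw [integral_sub (integrable_const _) hF_int_left, setIntegral_const]
    _ = μ.real (Ioc a b) • f b - ∫ s in Ioc a b, ∫ u in Ioc a b, F u s ∂μ := by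
        congr 1; exact integral_integral_swap hF
    _ = μ.real (Ioc a b) • f b - ∫ s in a..b, μ.real (Ioc a s) • f' s := by
        rw [integral_of_le hab, setIntegral_congr_fun measurableSet_Ioc hF_right]

end IntegrationByParts

theorem IntervalIntegrable.ofReal {f : ℝ → ℝ} {μ : Measure ℝ} {a b : ℝ}
    (hf : IntervalIntegrable f μ a b) : IntervalIntegrable (fun s => (f s : ℂ)) μ a b :=
  ⟨hf.1.ofReal, hf.2.ofReal⟩

theorem hasDerivAt_cexp_mul_ofReal (c : ℂ) (s : ℝ) :
    HasDerivAt (fun u : ℝ => Complex.exp (c * u)) (c * Complex.exp (c * s)) s := by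
  simpa [mul_comm] using ((hasDerivAt_id s).ofReal_comp.const_mul c).cexp

theorem integral_cexp_mul_eq_of_deriv_ae (c : ℂ) {f φ : ℝ → ℝ} {a b : ℝ}
    (hf : Differentiable ℝ f) (hφ : deriv f =ᵐ[volume] φ)
    (hφint : IntervalIntegrable φ volume a b) :
    ∫ s in a..b, Complex.exp (c * s) * φ s
      = Complex.exp (c * b) * f b - Complex.exp (c * a) * f a
        - c * ∫ s in a..b, Complex.exp (c * s) * f s := by
  have hparts := intervalIntegral.integral_mul_deriv_eq_deriv_mul
    (fun s _ => hasDerivAt_cexp_mul_ofReal c s) (fun s _ => (hf s).hasDerivAt.ofReal_comp) (Continuous.intervalIntegrable (by fun_prop) _ _)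
    (hφint.congr_ae (ae_restrict_of_ae hφ.symm)).ofReal
  have hφ_deriv : ∫ s in a..b, Complex.exp (c * s) * φ s
      = ∫ s in a..b, Complex.exp (c * s) * deriv f s :=
    integral_congr_ae (by filter_upwards [hφ] with s hs _ using by rw [hs])
  rw [hφ_deriv, hparts]
  simp_rw [mul_assoc, intervalIntegral.integral_const_mul]

theorem StieltjesFunction.intervalIntegrable_cexp_mul (g : StieltjesFunction ℝ) (c : ℂ) (a b : ℝ) :
    IntervalIntegrable (fun s => Complex.exp (c * s) * g s) volume a b :=
  g.mono.intervalIntegrable.ofReal.continuousOn_mul (by fun_prop : Continuous _).continuousOn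

theorem StieltjesFunction.setIntegral_cexp_eq (g : StieltjesFunction ℝ) (c : ℂ) {a b : ℝ}
    (hab : a ≤ b) :
    ∫ u in Ioc a b, Complex.exp (c * u) ∂g.measure
      = Complex.exp (c * b) * g b - Complex.exp (c * a) * g a
        - c * ∫ s in a..b, Complex.exp (c * s) * g s := by
  have hreal (s : ℝ) (hs : a ≤ s) : g.measure.real (Ioc a s) = g s - g a := by
    rw [measureReal_def, g.measure_Ioc, ENNReal.toReal_ofReal (sub_nonneg.2 (g.mono hs))]
  have hcexp_int : IntervalIntegrable (fun s : ℝ => c * Complex.exp (c * s)) volume a b :=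
    Continuous.intervalIntegrable (by fun_prop) _ _
  rw [setIntegral_Ioc_eq_measureReal_smul_sub_integral g.measure hab
    (fun s _ => hasDerivAt_cexp_mul_ofReal c s) hcexp_int]
  have hsplit : ∫ s in a..b, g.measure.real (Ioc a s) • (c * Complex.exp (c * s))
      = c * (∫ s in a..b, Complex.exp (c * s) * g s)
        - g a * (Complex.exp (c * b) - Complex.exp (c * a)) := calc
    _ = ∫ s in a..b, (c * (Complex.exp (c * s) * g s) - g a * (c * Complex.exp (c * s))) := by
        refine integral_congr fun s hs => ?_
        rw [uIcc_of_le hab] at hs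
        rw [hreal s hs.1, Complex.real_smul]
        push_cast
        ring
    _ = _ := by
        rw [integral_sub ((g.intervalIntegrable_cexp_mul c a b).const_mul c) (hcexp_int.const_mul _),
          intervalIntegral.integral_const_mul, intervalIntegral.integral_const_mul,
          integral_eq_sub_of_hasDerivAt (fun s _ => hasDerivAt_cexp_mul_ofReal c s) hcexp_int]
  rw [hsplit, hreal b hab, Complex.real_smul]
  push_cast
  ring

theorem StieltjesFunction.setIntegral_cexp_sub_setIntegral_cexp (g h : StieltjesFunction ℝ)
    (c : ℂ) {a b : ℝ} (hab : a ≤ b) :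
    (∫ u in Ioc a b, Complex.exp (c * u) ∂g.measure) - ∫ u in Ioc a b, Complex.exp (c * u) ∂h.measure
      = Complex.exp (c * b) * (g b - h b : ℝ) - Complex.exp (c * a) * (g a - h a : ℝ)
        - c * ∫ s in a..b, Complex.exp (c * s) * (g s - h s : ℝ) := by
  simp only [g.setIntegral_cexp_eq c hab, h.setIntegral_cexp_eq c hab, Complex.ofReal_sub,
    mul_sub, integral_sub (g.intervalIntegrable_cexp_mul c a b) (h.intervalIntegrable_cexp_mul c a b)]
  ring

theorem Finset.sum_range_pow_mul_of_telescoping {R : Type*} [CommRing R] {x l A : R}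
    {a I : ℕ → R} {d : ℕ} (h0 : a 0 = A - l * x * I 0)
    (hsucc : ∀ r < d, a (r + 1) = l * I r - l * x * I (r + 1)) :
    ∑ r ∈ range (d + 1), x ^ r * a r = A - l * x ^ (d + 1) * I d := by
  induction d with
  | zero => simp [h0]
  | succ d ih =>
    rw [sum_range_succ, ih fun r hr => hsucc r (by omega), hsucc d d.lt_succ_self]
    ring

theorem partial_integration_identity_general (d : ℕ) (lam : ℝ)
    (x : ℂ) (g h : StieltjesFunction ℝ) (H : ℕ → ℝ → ℝ)
    (hH0 : ∀ u, H 0 u = g u - h u)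
    (hH1diff : Differentiable ℝ (H 1))
    (hH1' : ∀ᵐ u : ℝ, deriv (H 1) u = lam * H 0 u)
    (hHr : ∀ r, 2 ≤ r → r ≤ d → ∀ u, HasDerivAt (H r) (lam * H (r - 1) u) u)
    (t : ℝ) (ht : 0 ≤ t) :
    (∑ r ∈ Finset.range (d + 1), Complex.exp (-(lam : ℂ) * x * (t : ℂ)) * x ^ r * (H r t : ℂ))
      - ∑ r ∈ Finset.range (d + 1), x ^ r * (H r 0 : ℂ)
    = ((∫ u in Set.Ioc (0 : ℝ) t, Complex.exp (-(lam : ℂ) * x * (u : ℂ)) ∂g.measure)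
        - ∫ u in Set.Ioc (0 : ℝ) t, Complex.exp (-(lam : ℂ) * x * (u : ℂ)) ∂h.measure)
      - (lam : ℂ) * x ^ (d + 1) *
          ∫ u in (0 : ℝ)..t, Complex.exp (-(lam : ℂ) * x * (u : ℂ)) * (H d u : ℂ) := by
  set c : ℂ := -(lam : ℂ) * x
  set I : ℕ → ℂ := fun r => ∫ u in (0 : ℝ)..t, Complex.exp (c * u) * (H r u : ℂ)
  have hdiff : ∀ r < d, Differentiable ℝ (H (r + 1)) := by
    rintro (_ | r) hr
    · exact hH1diff
    · exact fun u => (hHr (r + 2) (by omega) hr u).differentiableAt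
  have hderiv : ∀ r < d, deriv (H (r + 1)) =ᵐ[volume] fun u => lam * H r u := by
    rintro (_ | r) hr
    · exact hH1'
    · exact Filter.Eventually.of_forall fun u => (hHr (r + 2) (by omega) hr u).deriv
  have hint : ∀ r < d, IntervalIntegrable (H r) volume 0 t := by
    rintro (_ | r) hr
    · rw [funext hH0]
      exact g.mono.intervalIntegrable.sub h.mono.intervalIntegrable
    · exact (hdiff r (by omega)).continuous.intervalIntegrable 0 t
  have hzero : Complex.exp (c * t) * H 0 t - H 0 0
      = ((∫ u in Ioc (0 : ℝ) t, Complex.exp (c * u) ∂g.measure)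
        - ∫ u in Ioc (0 : ℝ) t, Complex.exp (c * u) ∂h.measure) - lam * x * I 0 := by
    simp only [g.setIntegral_cexp_sub_setIntegral_cexp h c ht, I, ← hH0, Complex.ofReal_zero,
      mul_zero, Complex.exp_zero, one_mul, c]
    ring
  have hsucc : ∀ r < d, Complex.exp (c * t) * H (r + 1) t - H (r + 1) 0
      = lam * I r - lam * x * I (r + 1) := by
    intro r hr
    have hstep := integral_cexp_mul_eq_of_deriv_ae c (hdiff r hr) (hderiv r hr)
      ((hint r hr).const_mul lam)
    simp only [Complex.ofReal_mul, mul_left_comm _ (lam : ℂ), intervalIntegral.integral_const_mul,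
      Complex.ofReal_zero, mul_zero, Complex.exp_zero, one_mul] at hstep
    linear_combination -hstep
  rw [← Finset.sum_sub_distrib]
  calc _ = ∑ r ∈ Finset.range (d + 1), x ^ r * (Complex.exp (c * t) * H r t - H r 0) :=
        Finset.sum_congr rfl fun r _ => by ring
    _ = _ := Finset.sum_range_pow_mul_of_telescoping hzero hsucc

/-- Partial-integration / ODE identity (equation (AB-Wx-def)): if `H_0 = g - h` is of
bounded variation (difference of two Stieltjes functions), `H_1,…,H_d` are continuously
differentiable with `H_r' = λ H_{r-1}` (`r ≥ 2`) and `H_1' = λ H_0` a.e., then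
`∑_r e^{-λxt} x^r H_r(t) - ∑_r x^r H_r(0)
   = ∫_{(0,t]} e^{-λxu} dH_0(u) - λ x^{d+1} ∫₀^t e^{-λxu} H_d(u) du`. -/
theorem partial_integration_identity (d : ℕ) (hd : 1 ≤ d) (lam : ℝ) (hlam : 0 < lam)
    (x : ℂ) (g h : StieltjesFunction ℝ) (H : ℕ → ℝ → ℝ)
    (hH0 : ∀ u, H 0 u = g u - h u)
    (hH1diff : Differentiable ℝ (H 1))
    (hH1' : ∀ᵐ u : ℝ, deriv (H 1) u = lam * H 0 u)
    (hHr : ∀ r, 2 ≤ r → r ≤ d → ∀ u, HasDerivAt (H r) (lam * H (r - 1) u) u)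
    (hHcont : ∀ r, 1 ≤ r → r ≤ d → Continuous (H r))
    (t : ℝ) (ht : 0 ≤ t) :
    (∑ r ∈ Finset.range (d + 1), Complex.exp (-(lam : ℂ) * x * (t : ℂ)) * x ^ r * (H r t : ℂ))
      - ∑ r ∈ Finset.range (d + 1), x ^ r * (H r 0 : ℂ)
    = ((∫ u in Set.Ioc (0 : ℝ) t, Complex.exp (-(lam : ℂ) * x * (u : ℂ)) ∂g.measure)
        - ∫ u in Set.Ioc (0 : ℝ) t, Complex.exp (-(lam : ℂ) * x * (u : ℂ)) ∂h.measure)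
      - (lam : ℂ) * x ^ (d + 1) *
          ∫ u in (0 : ℝ)..t, Complex.exp (-(lam : ℂ) * x * (u : ℂ)) * (H d u : ℂ) :=
  partial_integration_identity_general d lam x g h H hH0 hH1diff hH1' hHr t ht
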